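/- If NPr^ε(μ) holds for all cardinals μ < λ and cf(λ) = ω, then NPr^ε(λ) holds. -/

import Mathlib

open FirstOrder Cardinal

/-- The increasing enumeration of a finite set in a linear order. -/
noncomputable def enumFun {M : Type*} [LinearOrder M] (w : Finset M) : Fin w.card → M :=
  fun i => (w.orderIsoOfFin rfl i : M)

/-- `rk(w,𝕄) ≥ 0`. -/
def rkBase (L : Language) (M : Type*) [LinearOrder M] [L.Structure M] (w : Finset M) : Prop :=
  ∀ φ : L.Formula (Fin w.card), φ.IsQF → ∀ k : Fin w.card,
    φ.Realize (enumFun w) →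
      ¬ ({α : M | φ.Realize (Function.update (enumFun w) k α)}).Countable

/-- Successor step of the splitting rank. -/
def rkSucc (L : Language) (M : Type*) [LinearOrder M] [L.Structure M]
    (IH : Finset M → Prop) (w : Finset M) : Prop :=
  ∀ φ : L.Formula (Fin w.card), φ.IsQF → ∀ k : Fin w.card,
    φ.Realize (enumFun w) →
      ∃ α : M, α ∉ w ∧ IH (insert α w) ∧ φ.Realize (Function.update (enumFun w) k α)

/-- The splitting rank relation `rk(w,𝕄) ≥ δ`. -/
noncomputable def rkGe (L : Language) (M : Type*) [LinearOrder M] [L.Structure M]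
    (δ : Ordinal) : Finset M → Prop :=
  Ordinal.limitRecOn δ (rkBase L M) (fun _ IH => rkSucc L M IH)
    (fun _ _ IH w => ∀ γ (hγ : γ < _), IH γ hγ w)

/-- `NPr^ε(λ)`: there is a model with universe of cardinality `λ` in a countable vocabulary
all of whose nonempty finite subsets `w` satisfy `1 + rk(w) ≤ ε`. -/
def NPr (ε : Ordinal) (lam : Cardinal) : Prop :=
  ∃ (M : Type) (instO : LinearOrder M) (L : FirstOrder.Language.{0, 0}) (instS : L.Structure M),
    Cardinal.mk M = lam ∧ L.card ≤ Cardinal.aleph0 ∧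
    ∀ w : Finset M, w.Nonempty → ∀ δ : Ordinal, @rkGe L M instO instS δ w → 1 + δ ≤ ε

/-!
Since `cf λ = ω`, there are cardinals `μₙ < λ` with `∑ₙ μₙ = λ`. Take models `𝕄ₙ` witnessing
`NPr^ε(μₙ)` and glue them into their lexicographic sum, in the disjoint union of their
vocabularies together with a predicate for each piece. A quantifier-free condition on the part
of a finite set `w` inside `𝕄ₙ` is then a quantifier-free condition on `w` in the sum whose
solutions all lie in `𝕄ₙ`; so by induction on `δ`, `rk(w) ≥ δ` in the sum implies
`rk(w ∩ 𝕄ₙ) ≥ δ` in `𝕄ₙ`, and any `n` with `w ∩ 𝕄ₙ` nonempty gives `1 + δ ≤ ε`.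
-/

open FirstOrder.Language Function

theorem Cardinal.exists_seq_lt_sum_eq_of_cof_eq_aleph0 {c : Cardinal.{u}}
    (hc : c.ord.cof = ℵ₀) : ∃ μ : ℕ → Cardinal.{u}, (∀ n, μ n < c) ∧ Cardinal.sum μ = c := by
  have hc₀ : ℵ₀ ≤ c := hc ▸ Ordinal.cof_ord_le c
  obtain ⟨f, hf⟩ := Ordinal.exists_isFundamentalSeq (o := c.ord) (congrArg ord hc)
  let natIio : ℕ → Set.Iio (ord ℵ₀) := fun n => ⟨n, by simp⟩
  have hnat : Surjective natIio := by
    rintro ⟨i, hi⟩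
    obtain ⟨n, rfl⟩ := Ordinal.lt_omega0.mp (by simpa using hi)
    exact ⟨n, rfl⟩
  let g (n : ℕ) : Ordinal.{u} := (f (natIio n)).1
  have hg : ⨆ n, g n = c.ord := by
    rw [← hf.iSup_eq (by simp)]
    exact hnat.iSup_comp fun i => (f i).1
  refine ⟨fun n => (g n).card, fun n => lt_ord.mp (f _).2, le_antisymm ?_ ?_⟩
  · calc Cardinal.sum (fun n => (g n).card) ≤ lift.{u} #ℕ * ⨆ n, (g n).card :=
          sum_le_lift_mk_mul_iSup _
      _ ≤ ℵ₀ * c := by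
          rw [mk_nat, lift_aleph0]
          gcongr
          exact ciSup_le' fun n => (lt_ord.mp (f _).2).le
      _ = c := mul_eq_right hc₀ hc₀ aleph0_ne_zero
  · calc c = (⨆ n, g n).card := by rw [hg, card_ord]
      _ ≤ _ := Ordinal.card_iSup_le_sum_card g

section SplittingRank

variable {L : Language} {M : Type*} [LinearOrder M] [L.Structure M]

theorem rkGe_zero : rkGe L M 0 = rkBase L M :=
  Ordinal.limitRecOn_zero _ _ _

theorem rkGe_add_one (o : Ordinal) : rkGe L M (o + 1) = rkSucc L M (rkGe L M o) :=
  Ordinal.limitRecOn_add_one _ _ _ _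

theorem rkGe_of_isSuccLimit {o : Ordinal} (ho : Order.IsSuccLimit o) (w : Finset M) :
    rkGe L M o w ↔ ∀ γ < o, rkGe L M γ w := by
  rw [rkGe, Ordinal.limitRecOn_limit _ _ _ _ ho]
  rfl

variable {N : Type*} [LinearOrder N] {e : N → M} (he : Injective e)

noncomputable def preimageIndex (w : Finset M) (i : Fin (w.preimage e he.injOn).card) :
    Fin w.card :=
  (w.orderIsoOfFin rfl).symm
    ⟨e (enumFun _ i), Finset.mem_preimage.mp ((w.preimage e he.injOn).orderIsoOfFin rfl i).2⟩

theorem enumFun_comp_preimageIndex (w : Finset M) :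
    enumFun w ∘ preimageIndex he w = e ∘ enumFun (w.preimage e he.injOn) := by
  funext i
  simp [enumFun, preimageIndex]

theorem preimageIndex_injective (w : Finset M) : Injective (preimageIndex he w) :=
  (w.orderIsoOfFin rfl).symm.injective.comp fun _ _ hij =>
    ((w.preimage e he.injOn).orderIsoOfFin rfl).injective <|
      Subtype.ext (he (congrArg Subtype.val hij))

theorem update_enumFun_comp_preimageIndex (w : Finset M)
    (k : Fin (w.preimage e he.injOn).card) (β : N) :
    update (enumFun w) (preimageIndex he w k) (e β) ∘ preimageIndex he w
      = e ∘ update (enumFun (w.preimage e he.injOn)) k β := by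
  rw [update_comp_eq_of_injective _ (preimageIndex_injective he w),
    enumFun_comp_preimageIndex, comp_update]

def HasQFLifts (L' : Language) [L'.Structure N] : Prop :=
  ∀ (w : Finset M) (ψ : L'.Formula (Fin (w.preimage e he.injOn).card)), ψ.IsQF → ∀ k,
    ∃ (φ : L.Formula (Fin w.card)) (k' : Fin w.card), φ.IsQF ∧
      (ψ.Realize (enumFun _) → φ.Realize (enumFun w)) ∧
      ∀ α, φ.Realize (update (enumFun w) k' α) →
        ∃ β, e β = α ∧ ψ.Realize (update (enumFun _) k β)

theorem rkGe_preimage {L' : Language} [L'.Structure N] (hqf : HasQFLifts (L := L) he L')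
    (δ : Ordinal) {w : Finset M} (hw : rkGe L M δ w) :
    rkGe L' N δ (w.preimage e he.injOn) := by
  induction δ using Ordinal.limitRecOn generalizing w with
  | zero =>
    rw [rkGe_zero] at hw ⊢
    intro ψ hψ k hψw hcount
    obtain ⟨φ, k', hφ, himp, hsol⟩ := hqf w ψ hψ k
    refine hw φ hφ k' (himp hψw) ((hcount.image e).mono fun α hα => ?_)
    obtain ⟨β, hβ, hψβ⟩ := hsol α hα
    exact ⟨β, hψβ, hβ⟩
  | add_one δ IH =>
    rw [rkGe_add_one] at hw ⊢
    intro ψ hψ k hψw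
    obtain ⟨φ, k', hφ, himp, hsol⟩ := hqf w ψ hψ k
    obtain ⟨α, hαw, hrk, hα⟩ := hw φ hφ k' (himp hψw)
    obtain ⟨β, rfl, hψβ⟩ := hsol α hα
    have hins : (insert (e β) w).preimage e he.injOn = insert β (w.preimage e he.injOn) := by
      ext; simp [he.eq_iff]
    exact ⟨β, by simpa using hαw, hins ▸ IH hrk, hψβ⟩
  | limit o ho IH =>
    rw [rkGe_of_isSuccLimit ho] at hw ⊢
    exact fun γ hγ => IH γ hγ (hw γ hγ)

end SplittingRank

namespace Sigma

variable {ι : Type*} {M : ι → Type*}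

def toLexMk (i : ι) (a : M i) : Σₗ i, M i := toLex ⟨i, a⟩

theorem toLexMk_injective (i : ι) : Injective (toLexMk (M := M) i) :=
  toLex.injective.comp sigma_mk_injective

theorem exists_toLexMk_eq_of_fst_eq {x : Σₗ i, M i} {i : ι} (hx : (ofLex x).1 = i) :
    ∃ b, toLexMk i b = x := by
  obtain ⟨j, b⟩ := x
  subst hx
  exact ⟨b, rfl⟩

end Sigma

namespace FirstOrder.Language

theorem BoundedFormula.IsQF.onBoundedFormula {L L' : Language} (ϕ : L →ᴸ L') {α : Type*} {n : ℕ}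
    {φ : L.BoundedFormula α n} (h : φ.IsQF) : (ϕ.onBoundedFormula φ).IsQF := by
  induction h with
  | falsum => exact isQF_bot
  | of_isAtomic ha => cases ha with
    | equal => exact (IsAtomic.equal _ _).isQF
    | rel => exact (IsAtomic.rel _ _).isQF
  | imp _ _ ih₁ ih₂ => exact ih₁.imp ih₂

variable {ι : Type*} (L : ι → Language)

/-- The disjoint union of the languages `L i`, together with, for each `i` and each arity,
a relation symbol `Sum.inr i` saying that all arguments lie in the `i`-th piece. -/
def sigma : Language where
  Functions n := Σ i, (L i).Functions n
  Relations n := (Σ i, (L i).Relations n) ⊕ ι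

theorem card_sigma_le_aleph0 [Countable ι] (hL : ∀ i, (L i).card ≤ ℵ₀) :
    (sigma L).card ≤ ℵ₀ := by
  have (i : ι) : Countable (L i).Symbols := Cardinal.mk_le_aleph0_iff.mp (hL i)
  have (i : ι) (n : ℕ) : Countable ((L i).Functions n) :=
    Injective.countable (f := fun f => (Sum.inl ⟨n, f⟩ : (L i).Symbols))
      (Sum.inl_injective.comp sigma_mk_injective)
  have (i : ι) (n : ℕ) : Countable ((L i).Relations n) :=
    Injective.countable (f := fun R => (Sum.inr ⟨n, R⟩ : (L i).Symbols))
      (Sum.inr_injective.comp sigma_mk_injective)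
  have : Countable (sigma L).Symbols :=
    inferInstanceAs <|
      Countable ((Σ n, Σ i, (L i).Functions n) ⊕ (Σ n, (Σ i, (L i).Relations n) ⊕ ι))
  exact Cardinal.mk_le_aleph0

variable {L} {M : ι → Type*} [∀ i, (L i).Structure (M i)]

open Classical in
/-- A function symbol of `L i` applied to arguments not all in the `i`-th piece returns its
first argument (a constant always applies, so there is one). -/
noncomputable instance : (sigma L).Structure (Σₗ i, M i) where
  funMap f x :=
    if h : ∃ y, Sigma.toLexMk f.1 ∘ y = x then Sigma.toLexMk f.1 (Structure.funMap f.2 h.choose)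
    else x ⟨0, Nat.pos_of_ne_zero fun hn =>
      h ⟨fun j => (hn ▸ j).elim0, funext fun j => (hn ▸ j).elim0⟩⟩
  RelMap R x := R.elim (fun R => ∃ y, Sigma.toLexMk R.1 ∘ y = x ∧ Structure.RelMap R.2 y)
    fun i => ∀ j, (ofLex (x j)).1 = i

theorem funMap_sigma_toLexMk {i : ι} {n : ℕ} (f : (L i).Functions n) (y : Fin n → M i) :
    Structure.funMap (L := sigma L) (⟨i, f⟩ : Σ i, (L i).Functions n) (Sigma.toLexMk i ∘ y)
      = Sigma.toLexMk i (Structure.funMap f y) := by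
  have h : ∃ y', Sigma.toLexMk i ∘ y' = Sigma.toLexMk i ∘ y := ⟨y, rfl⟩
  simp only [Structure.funMap, dif_pos h]
  rw [(Sigma.toLexMk_injective i).comp_left h.choose_spec]

theorem relMap_sigma_toLexMk {i : ι} {n : ℕ} (R : (L i).Relations n) (y : Fin n → M i) :
    Structure.RelMap (L := sigma L) (Sum.inl ⟨i, R⟩ : (Σ i, (L i).Relations n) ⊕ ι)
      (Sigma.toLexMk i ∘ y) ↔ Structure.RelMap R y := by
  refine ⟨fun ⟨y', hy', hR⟩ => ?_, fun hR => ⟨y, rfl, hR⟩⟩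
  rwa [← (Sigma.toLexMk_injective i).comp_left hy']

variable (L) in
def pieceRel (i : ι) : (sigma L).Relations 1 := Sum.inr i

@[simp]
theorem relMap_pieceRel (i : ι) (x : Σₗ i, M i) :
    Structure.RelMap (pieceRel L i) ![x] ↔ (ofLex x).1 = i := by
  show (∀ j : Fin 1, _) ↔ _
  simp

variable (L) in
def sigmaLHom (i : ι) : L i →ᴸ sigma L where
  onFunction _ f := ⟨i, f⟩
  onRelation _ R := Sum.inl ⟨i, R⟩

theorem realize_onFormula_sigmaLHom {i : ι} {α : Type*} {ψ : (L i).Formula α} (hψ : ψ.IsQF)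
    (v : α → M i) :
    ((sigmaLHom L i).onFormula ψ).Realize (Sigma.toLexMk i ∘ v) ↔ ψ.Realize v := by
  let _ := (sigmaLHom L i).reduct (Σₗ i, M i)
  have _ := LHom.isExpansionOn_reduct (sigmaLHom L i) (Σₗ i, M i)
  let emb : (L i).Embedding (M i) (Σₗ i, M i) :=
    { toFun := Sigma.toLexMk i
      inj' := Sigma.toLexMk_injective i
      map_fun' := fun f y => (funMap_sigma_toLexMk f y).symm
      map_rel' := fun R y => relMap_sigma_toLexMk R y }
  rw [LHom.realize_onFormula]
  have h := hψ.realize_embedding emb (v := v) (xs := default)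
  rwa [Subsingleton.elim (emb ∘ default) default] at h

theorem hasQFLifts_sigma [LinearOrder ι] [∀ i, LinearOrder (M i)] (i : ι) :
    HasQFLifts (L := sigma L) (Sigma.toLexMk_injective (M := M) i) (L i) := by
  intro w ψ hψ k
  set π := preimageIndex (Sigma.toLexMk_injective i) w
  refine ⟨((sigmaLHom L i).onFormula ψ).relabel π ⊓
      (pieceRel L i).formula₁ (Term.var (π k)), π k,
    ((hψ.onBoundedFormula _).relabel _).inf (BoundedFormula.IsAtomic.rel _ _).isQF, fun hψw => ?_,
    fun α hα => ?_⟩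
  · rw [Formula.realize_inf, Formula.realize_relabel, enumFun_comp_preimageIndex,
      realize_onFormula_sigmaLHom hψ, Formula.realize_rel₁, relMap_pieceRel, Term.realize_var,
      ← comp_apply (f := enumFun w), enumFun_comp_preimageIndex]
    exact ⟨hψw, rfl⟩
  · rw [Formula.realize_inf, Formula.realize_relabel, Formula.realize_rel₁, relMap_pieceRel,
      Term.realize_var, update_self] at hα
    obtain ⟨hψα, hαi⟩ := hα
    obtain ⟨β, rfl⟩ := Sigma.exists_toLexMk_eq_of_fst_eq hαi
    rw [update_enumFun_comp_preimageIndex, realize_onFormula_sigmaLHom hψ] at hψα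
    exact ⟨β, rfl, hψα⟩

end FirstOrder.Language

/-- If `NPr^ε(μ)` holds for all `μ < λ` and `cf(λ) = ω`, then `NPr^ε(λ)` holds. -/
theorem stmt_8 (ε : Ordinal) (lam : Cardinal)
    (h : ∀ μ : Cardinal, μ < lam → NPr ε μ)
    (hcf : lam.ord.cof = Cardinal.aleph0) : NPr ε lam := by
  obtain ⟨μ, hμ, hsum⟩ := Cardinal.exists_seq_lt_sum_eq_of_cof_eq_aleph0 hcf
  choose M _ L _ hM hL hrk using fun n => h (μ n) (hμ n)
  refine ⟨Σₗ n, M n, inferInstance, Language.sigma L, inferInstance, ?_,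
    Language.card_sigma_le_aleph0 L hL, ?_⟩
  · rw [← hsum, ← funext hM]
    exact Cardinal.mk_sigma M
  · rintro w ⟨x, hx⟩ δ hδ
    exact hrk (ofLex x).1 _ ⟨(ofLex x).2, Finset.mem_preimage.mpr hx⟩ δ
      (rkGe_preimage _ (Language.hasQFLifts_sigma _) δ hδ)
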